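/- arXiv:1207.6377 — 8 statements merged into one kernel-verified Lean document; each statement's English description precedes it below -/
import Mathlib

section
/- Let X be a Hausdorff space which is a continuous image of some compact linearly ordered topological space. Then there exist a compact linearly ordered topological space K and a continuous surjection f : K → X which is reduced, i.e. both irreducible and order-light. -/
universe u

open Set Topology

/-- The character of a space `X` at a point `x`: the least cardinality of a
neighborhood base of `X` at `x`. -/
noncomputable def nhdsChar (X : Type u) [TopologicalSpace X] (x : X) : Cardinal.{u} :=
  sInf { c | ∃ B : Set (Set X), Cardinal.mk B = c ∧ (∀ U ∈ B, U ∈ nhds x) ∧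
      ∀ V ∈ nhds x, ∃ U ∈ B, U ⊆ V }

/-- The character of a space: `χ(X) = sup_{x ∈ X} χ(x, X)`. -/
noncomputable def spaceChar (X : Type u) [TopologicalSpace X] : Cardinal.{u} :=
  ⨆ x : X, nhdsChar X x

/-- The cellularity of a space: the supremum of cardinalities of pairwise disjoint
families of nonempty open subsets. -/
noncomputable def cellularity (X : Type u) [TopologicalSpace X] : Cardinal.{u} :=
  sSup { c | ∃ 𝒰 : Set (Set X), Cardinal.mk 𝒰 = c ∧ (∀ U ∈ 𝒰, IsOpen U ∧ U.Nonempty) ∧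
      𝒰.PairwiseDisjoint id }

/-- The density of a space: the least cardinality of a dense subset. -/
noncomputable def density (X : Type u) [TopologicalSpace X] : Cardinal.{u} :=
  sInf { c | ∃ D : Set X, Cardinal.mk D = c ∧ Dense D }

/-- The weight of a space: the least cardinality of a base for the topology. -/
noncomputable def weight (X : Type u) [TopologicalSpace X] : Cardinal.{u} :=
  sInf { c | ∃ B : Set (Set X), Cardinal.mk B = c ∧ TopologicalSpace.IsTopologicalBasis B }

/-- A surjective map is irreducible if no proper closed subset maps onto the codomain. -/
def IsIrreducibleMap {K : Type*} {X : Type*} [TopologicalSpace K] [TopologicalSpace X]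
    (f : K → X) : Prop :=
  Function.Surjective f ∧ ∀ A : Set K, IsClosed A → A ≠ univ → f '' A ≠ univ

/-- `C` is an order component of `A`: a maximal convex subset of `A`. -/
def IsOrderComponent {K : Type*} [LinearOrder K] (A C : Set K) : Prop :=
  C ⊆ A ∧ C.OrdConnected ∧ ∀ C' : Set K, C ⊆ C' → C' ⊆ A → C'.OrdConnected → C' = C

/-- A map from a linearly ordered set is order-light if every order component of every
fiber is a singleton. -/
def OrderLight {K : Type*} {X : Type*} [LinearOrder K] (f : K → X) : Prop :=
  ∀ x : X, ∀ C : Set K, IsOrderComponent (f ⁻¹' {x}) C → ∃ k, C = {k}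

/-- The countable chain condition: every pairwise disjoint family of nonempty open sets
is countable. -/
def CCC (X : Type*) [TopologicalSpace X] : Prop :=
  ∀ 𝒰 : Set (Set X), (∀ U ∈ 𝒰, IsOpen U ∧ U.Nonempty) → 𝒰.PairwiseDisjoint id → 𝒰.Countable

/-- A space is non-archimedean if it has a base any two members of which are either
disjoint or comparable by inclusion. -/
def NonArchimedean (X : Type*) [TopologicalSpace X] : Prop :=
  ∃ B : Set (Set X), TopologicalSpace.IsTopologicalBasis B ∧
    ∀ U ∈ B, ∀ V ∈ B, Disjoint U V ∨ U ⊆ V ∨ V ⊆ U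

/-- A space is perfectly normal if it is normal and every closed set is a Gδ-set. -/
def PerfNormal (X : Type*) [TopologicalSpace X] : Prop :=
  NormalSpace X ∧ ∀ A : Set X, IsClosed A → IsGδ A

/-- `X` is a continuous image of some compact linearly ordered topological space
(a linearly ordered set equipped with its order topology). -/
def ContinuousImageOfCompactLOTS (X : Type u) [TopologicalSpace X] : Prop :=
  ∃ (K : Type u) (lo : LinearOrder K) (tK : TopologicalSpace K),
    letI := lo; letI := tK;
    OrderTopology K ∧ CompactSpace K ∧ ∃ f : K → X, Continuous f ∧ Function.Surjective f

/-- A closed set `A` is a strong T-set: the boundary of each connected component of the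
complement consists of exactly two points, and each such component is homeomorphic to the
open unit interval `(0,1)`. -/
def IsStrongTSet {Y : Type*} [TopologicalSpace Y] (A : Set Y) : Prop :=
  IsClosed A ∧ ∀ x ∈ Aᶜ,
    (∃ a b : Y, a ≠ b ∧ frontier (connectedComponentIn Aᶜ x) = {a, b}) ∧
    Nonempty (↥(connectedComponentIn Aᶜ x) ≃ₜ ↥(Ioo (0:ℝ) 1))

/-- Souslin's Hypothesis: every ccc LOTS is separable. -/
def SouslinHypothesis : Prop :=
  ∀ (L : Type u) (lo : LinearOrder L) (tL : TopologicalSpace L),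
    letI := lo; letI := tL;
    OrderTopology L → CCC L → TopologicalSpace.SeparableSpace L

/-!
By Zorn's lemma a continuous surjection from a compact space restricts to an irreducible map on
a compact subset, and a compact subset `E` of a LOTS is itself a LOTS: its order topology is
Hausdorff and coarser than the compact subspace topology, hence equal to it. Collapsing every
order component of every fiber to a point then gives a condensation `Q` of `E`. The classes are
closed, so preimages of open rays of `Q` are open and the quotient topology of `Q` is again its
(compact) order topology. The induced map `Q → X` stays irreducible, and it is order-light because
a convex subset of one of its fibers is the image of a convex subset of a fiber of the original
map, which lies in a single class.
-/

lemma TopologicalSpace.eq_of_le_of_compactSpace_of_t2Space {α : Type*} {t₁ t₂ : TopologicalSpace α}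
    [@CompactSpace α t₁] [@T2Space α t₂] (h : t₁ ≤ t₂) : t₁ = t₂ :=
  le_antisymm h <| continuous_id_iff_le.1 <|
    @Continuous.continuous_symm_of_equiv_compact_to_t2 α α t₁ t₂ _ _ (Equiv.refl α)
      (continuous_id_of_le h)

section LinearOrder

variable {α : Type*} [LinearOrder α]

lemma orderTopology_of_isOpen_Ioi_Iio [TopologicalSpace α] [CompactSpace α]
    (hIoi : ∀ a : α, IsOpen (Ioi a)) (hIio : ∀ a : α, IsOpen (Iio a)) : OrderTopology α :=
  have : @T2Space α (Preorder.topology α) :=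
    @OrderClosedTopology.to_t2Space α (Preorder.topology α) _
      (@OrderTopology.to_orderClosedTopology α (Preorder.topology α) _
        (@OrderTopology.mk α (Preorder.topology α) _ rfl))
  ⟨TopologicalSpace.eq_of_le_of_compactSpace_of_t2Space <|
    le_generateFrom <| by rintro s ⟨a, rfl | rfl⟩; exacts [hIoi a, hIio a]⟩

lemma orderTopology_subtype_of_compactSpace [TopologicalSpace α] [OrderClosedTopology α]
    {E : Set α} [CompactSpace E] : OrderTopology E :=
  orderTopology_of_isOpen_Ioi_Iio (fun _ => isOpen_Ioi.preimage continuous_subtype_val)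
    (fun _ => isOpen_Iio.preimage continuous_subtype_val)

lemma IsClosed.ordConnectedComponent [TopologicalSpace α] [OrderClosedTopology α] {s : Set α}
    (hs : IsClosed s) (x : α) : IsClosed (ordConnectedComponent s x) := by
  refine isClosed_of_closure_subset fun y hy => mem_ordConnectedComponent.2 fun z hz => ?_
  rw [mem_uIcc] at hz
  rcases lt_trichotomy z y with hzy | rfl | hyz
  · obtain ⟨c, hzc, hc⟩ := mem_closure_iff_nhds.1 hy _ (Ioi_mem_nhds hzy)
    exact mem_ordConnectedComponent.1 hc (mem_uIcc.2 (by grind))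
  · exact hs.closure_subset (closure_mono ordConnectedComponent_subset hy)
  · obtain ⟨c, hzc, hc⟩ := mem_closure_iff_nhds.1 hy _ (Iio_mem_nhds hyz)
    exact mem_ordConnectedComponent.1 hc (mem_uIcc.2 (by grind))

lemma Quotient.orderTopology [TopologicalSpace α] [OrderClosedTopology α] [CompactSpace α]
    {s : Setoid α}
    [∀ x, OrdConnected (Quotient.mk s ⁻¹' {x})] [T1Space (Quotient s)] :
    OrderTopology (Quotient s) := by
  classical
  refine orderTopology_of_isOpen_Ioi_Iio (α := Quotient s) (fun q => ?_) (fun q => ?_) <;>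
    induction q using Quotient.inductionOn with | h a => ?_ <;>
    rw [← isQuotientMap_quotient_mk'.isOpen_preimage]
  · have : Quotient.mk s ⁻¹' Ioi ⟦a⟧ = Ioi a \ Quotient.mk s ⁻¹' {⟦a⟧} := by
      ext b; simp [Quotient.mk_lt_mk, Quotient.eq, Setoid.comm']
    exact this ▸ isOpen_Ioi.sdiff (isClosed_singleton.preimage continuous_quotient_mk')
  · have : Quotient.mk s ⁻¹' Iio ⟦a⟧ = Iio a \ Quotient.mk s ⁻¹' {⟦a⟧} := by
      ext b; simp [Quotient.mk_lt_mk, Quotient.eq]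
    exact this ▸ isOpen_Iio.sdiff (isClosed_singleton.preimage continuous_quotient_mk')

end LinearOrder

section OrderComponentSetoid

variable {K X : Type*} [LinearOrder K]

def orderComponentSetoid (f : K → X) : Setoid K where
  r a b := b ∈ ordConnectedComponent (f ⁻¹' {f a}) a
  iseqv.refl _ := self_mem_ordConnectedComponent.2 rfl
  iseqv.symm {a b} h := by
    have hba : f b = f a := ordConnectedComponent_subset (s := f ⁻¹' {f a}) h
    rw [hba]
    exact mem_ordConnectedComponent_comm.1 h
  iseqv.trans {a b c} hab hbc := by
    have hba : f b = f a := ordConnectedComponent_subset (s := f ⁻¹' {f a}) hab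
    rw [hba] at hbc
    exact mem_ordConnectedComponent_trans hab hbc

lemma apply_eq_of_orderComponentSetoid {f : K → X} {a b : K} (h : orderComponentSetoid f a b) :
    f a = f b :=
  (ordConnectedComponent_subset (s := f ⁻¹' {f a}) h).symm

def orderComponentLift (f : K → X) : Quotient (orderComponentSetoid f) → X :=
  Quotient.lift f fun _ _ => apply_eq_of_orderComponentSetoid

lemma orderComponentLift_comp_mk (f : K → X) :
    orderComponentLift f ∘ Quotient.mk (orderComponentSetoid f) = f :=
  rfl

lemma preimage_mk_orderComponentSetoid (f : K → X) (a : K) :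
    Quotient.mk (orderComponentSetoid f) ⁻¹' {⟦a⟧} = ordConnectedComponent (f ⁻¹' {f a}) a := by
  ext b
  exact Quotient.eq.trans (orderComponentSetoid f).comm'

instance (f : K → X) : ∀ x, OrdConnected (Quotient.mk (orderComponentSetoid f) ⁻¹' {x}) := by
  rintro ⟨a⟩
  exact preimage_mk_orderComponentSetoid f a ▸ inferInstance

lemma t1Space_quotient_orderComponentSetoid [TopologicalSpace K] [OrderClosedTopology K]
    [TopologicalSpace X] [T1Space X] {f : K → X} (hf : Continuous f) :
    T1Space (Quotient (orderComponentSetoid f)) := by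
  refine ⟨fun q => ?_⟩
  induction q using Quotient.inductionOn with | h a => ?_
  exact isQuotientMap_quotient_mk'.isClosed_preimage.1 <| preimage_mk_orderComponentSetoid f a ▸
    (isClosed_singleton.preimage hf).ordConnectedComponent a

lemma subsingleton_of_ordConnected_of_subset_preimage_lift {f : K → X} {x : X}
    {C : Set (Quotient (orderComponentSetoid f))} (hC : C.OrdConnected)
    (hCf : C ⊆ orderComponentLift f ⁻¹' {x}) :
    C.Subsingleton := by
  classical
  rintro ⟨a⟩ ha ⟨b⟩ hb
  refine Quotient.sound (mem_ordConnectedComponent.2 fun c hc => ?_)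
  have hcC : ⟦c⟧ ∈ C := hC.uIcc_subset ha hb (Quotient.mk_monotone.mapsTo_uIcc hc)
  exact ((hCf hcC).trans (hCf ha).symm :)

end OrderComponentSetoid

lemma IsIrreducibleMap.of_comp {K Q X : Type*} [TopologicalSpace K] [TopologicalSpace Q]
    [TopologicalSpace X] {q : K → Q} {f : Q → X} (hq : Continuous q)
    (hq' : Function.Surjective q) (h : IsIrreducibleMap (f ∘ q)) : IsIrreducibleMap f := by
  refine ⟨h.1.of_comp, fun A hA hAne hfA => h.2 (q ⁻¹' A) (hA.preimage hq) ?_ ?_⟩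
  · exact fun h' => hAne (hq'.preimage_injective (h'.trans preimage_univ.symm))
  · rwa [image_comp, image_preimage_eq A hq']

lemma orderLight_of_forall_ordConnected_subsingleton {K X : Type*} [LinearOrder K] {f : K → X}
    (hf : Function.Surjective f)
    (h : ∀ x C, C.OrdConnected → C ⊆ f ⁻¹' {x} → C.Subsingleton) : OrderLight f := by
  rintro x C ⟨hCf, hC, hmax⟩
  obtain rfl | hsingle := (h x C hC hCf).eq_empty_or_singleton
  · obtain ⟨k, rfl⟩ := hf x
    exact ⟨k, (hmax {k} (empty_subset _) (singleton_subset_iff.2 rfl) ordConnected_singleton).symm⟩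
  · exact hsingle

theorem reduced_map_exists (X : Type u) [TopologicalSpace X] [T2Space X]
    (hX : ContinuousImageOfCompactLOTS X) :
    ∃ (K : Type u) (lo : LinearOrder K) (tK : TopologicalSpace K),
      letI := lo; letI := tK;
      OrderTopology K ∧ CompactSpace K ∧
        ∃ f : K → X, Continuous f ∧ Function.Surjective f ∧
          IsIrreducibleMap f ∧ OrderLight f := by
  classical
  obtain ⟨L, _, _, _, _, g, hg, hg'⟩ := hX
  obtain ⟨E, _, hgE, hE⟩ := exists_compact_surjective_zorn_subset hg hg'
  have : OrderTopology E := orderTopology_subtype_of_compactSpace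
  let g₁ := E.domRestrict g
  have hg₁ : Continuous g₁ := hg.comp continuous_subtype_val
  have hirr₁ : IsIrreducibleMap g₁ :=
    ⟨range_eq_univ.1 ((range_domRestrict g E).trans hgE), fun A hA hA' => hE A hA' hA⟩
  have := t1Space_quotient_orderComponentSetoid hg₁
  let f := orderComponentLift g₁
  have hirr : IsIrreducibleMap f :=
    (orderComponentLift_comp_mk g₁ ▸ hirr₁).of_comp continuous_quotient_mk' Quotient.mk_surjective
  exact ⟨_, Quotient.instLinearOrder, _, Quotient.orderTopology, inferInstance, f,
    hg₁.quotient_lift _, hirr.1, hirr, orderLight_of_forall_ordConnected_subsingleton hirr.1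
      fun _ _ => subsingleton_of_ordConnected_of_subset_preimage_lift⟩
end

section
/- Let K be a compact linearly ordered topological space, X a Hausdorff space, and f : K → X a continuous order-light surjection. Then for every k ∈ K, the character of K at k is at most the character of X at f(k), i.e. χ(k, K) ≤ χ(f(k), X). -/
universe u

open Set Topology

/-!
For a point `k`, the sets `V ↦ ordConnectedComponent (f ⁻¹' V) k`, `V` ranging over
neighbourhoods of `f k`, form a neighbourhood base at `k`, so a base at `f k` yields one at `k`
of no larger cardinality. They are neighbourhoods because `f` is continuous and `K` has a base
of convex sets. Given an open `U ∋ k`, compactness gives a largest point `a ≤ k` outside `U`;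
order-lightness gives `q ∈ [a, k]` with `f q ≠ f k`, and then the component of `k` in
`f ⁻¹' {f q}ᶜ` cannot reach past `q` to the left, so its part left of `k` lies in `U`.
The right side is the same argument in `Kᵒᵈ`.
-/

theorem nhdsChar_le_of_hasBasis {X Y : Type u} [TopologicalSpace X] [TopologicalSpace Y]
    {x : X} {y : Y} {g : Set Y → Set X} (hg : Monotone g) (h : (𝓝 x).HasBasis (· ∈ 𝓝 y) g) :
    nhdsChar X x ≤ nhdsChar Y y := by
  obtain ⟨B, hB, hBnhds, hBbase⟩ := csInf_mem (s := { c | ∃ B : Set (Set Y),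
      Cardinal.mk B = c ∧ (∀ U ∈ B, U ∈ 𝓝 y) ∧ ∀ V ∈ 𝓝 y, ∃ U ∈ B, U ⊆ V })
    ⟨_, {V | V ∈ 𝓝 y}, rfl, fun _ hU => hU, fun V hV => ⟨V, hV, subset_rfl⟩⟩
  calc nhdsChar X x ≤ Cardinal.mk (g '' B) := csInf_le' ⟨g '' B, rfl, ?_, fun W hW => ?_⟩
    _ ≤ Cardinal.mk B := Cardinal.mk_image_le
    _ = nhdsChar Y y := hB
  · rintro _ ⟨V, hV, rfl⟩
    exact h.mem_of_mem (hBnhds V hV)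
  · obtain ⟨V, hV, hVW⟩ := h.mem_iff.1 hW
    obtain ⟨U, hU, hUV⟩ := hBbase V hV
    exact ⟨g U, mem_image_of_mem g hU, (hg hUV).trans hVW⟩

theorem Set.ordConnectedComponent_mono {α : Type*} [LinearOrder α] {s t : Set α} (h : s ⊆ t)
    (x : α) : ordConnectedComponent s x ⊆ ordConnectedComponent t x :=
  fun _ hy => mem_ordConnectedComponent.2 ((mem_ordConnectedComponent.1 hy).trans h)

theorem isOrderComponent_ordConnectedComponent {α : Type*} [LinearOrder α] {s : Set α} {x : α}
    (hx : x ∈ s) : IsOrderComponent s (ordConnectedComponent s x) :=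
  ⟨ordConnectedComponent_subset, inferInstance, fun _ hsub hs _ =>
    subset_antisymm (subset_ordConnectedComponent (hsub (self_mem_ordConnectedComponent.2 hx)) hs)
      hsub⟩

theorem OrderLight.ordConnectedComponent_fiber_eq {K X : Type*} [LinearOrder K] {f : K → X}
    (hf : OrderLight f) (k : K) : ordConnectedComponent (f ⁻¹' {f k}) k = {k} := by
  have hk : k ∈ f ⁻¹' {f k} := rfl
  obtain ⟨k', hk'⟩ := hf (f k) _ (isOrderComponent_ordConnectedComponent hk)
  have hkk' := self_mem_ordConnectedComponent.2 hk
  rw [hk'] at hkk' ⊢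
  rw [hkk']

section

variable {K X : Type*} [LinearOrder K] [TopologicalSpace K] [CompactSpace K]
  [TopologicalSpace X] [T1Space X] {f : K → X} {k : K}

theorem exists_nhds_ordConnectedComponent_inter_Iic_subset [OrderClosedTopology K]
    (hk : ordConnectedComponent (f ⁻¹' {f k}) k = {k}) {U : Set K} (hU : IsOpen U)
    (hkU : k ∈ U) : ∃ V ∈ 𝓝 (f k), ordConnectedComponent (f ⁻¹' V) k ∩ Iic k ⊆ U := by
  rcases (Iic k \ U).eq_empty_or_nonempty with hS | hS
  · exact ⟨univ, Filter.univ_mem, fun p hp => by_contra fun hpU => hS.subset ⟨hp.2, hpU⟩⟩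
  obtain ⟨a, ⟨hak, haU⟩, ha⟩ := (isClosed_Iic.sdiff hU).isCompact.exists_isGreatest hS
  replace hak : a < k := hak.lt_of_ne fun h => haU (h ▸ hkU)
  obtain ⟨q, hq, hfq⟩ : ∃ q ∈ Icc a k, f q ≠ f k := by
    by_contra! h
    have ha_fiber : a ∈ ordConnectedComponent (f ⁻¹' {f k}) k := by
      rwa [mem_ordConnectedComponent, uIcc_of_ge hak.le]
    rw [hk] at ha_fiber
    exact hak.ne ha_fiber
  refine ⟨{f q}ᶜ, isOpen_compl_singleton.mem_nhds hfq.symm, fun p ⟨hpC, hpk⟩ => ?_⟩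
  by_contra hpU
  have hqC : q ∈ uIcc k p := by
    rw [uIcc_of_ge hpk]
    exact ⟨(ha ⟨hpk, hpU⟩).trans hq.1, hq.2⟩
  exact mem_ordConnectedComponent.1 hpC hqC rfl

theorem exists_nhds_ordConnectedComponent_inter_Ici_subset [OrderClosedTopology K]
    (hk : ordConnectedComponent (f ⁻¹' {f k}) k = {k}) {U : Set K} (hU : IsOpen U)
    (hkU : k ∈ U) : ∃ V ∈ 𝓝 (f k), ordConnectedComponent (f ⁻¹' V) k ∩ Ici k ⊆ U := by
  have : CompactSpace Kᵒᵈ := ‹CompactSpace K›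
  have hk' : ordConnectedComponent ((f ∘ OrderDual.ofDual) ⁻¹' {f k}) (OrderDual.toDual k) =
      {OrderDual.toDual k} := by
    rw [preimage_comp, dual_ordConnectedComponent, hk]
    rfl
  obtain ⟨V, hV, hVU⟩ := exists_nhds_ordConnectedComponent_inter_Iic_subset
    (K := Kᵒᵈ) (k := OrderDual.toDual k) (U := OrderDual.ofDual ⁻¹' U) hk' hU hkU
  rw [preimage_comp, dual_ordConnectedComponent] at hVU
  exact ⟨V, hV, hVU⟩

theorem hasBasis_nhds_ordConnectedComponent_preimage [OrderTopology K] (hf : Continuous f)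
    (hk : ordConnectedComponent (f ⁻¹' {f k}) k = {k}) :
    (𝓝 k).HasBasis (· ∈ 𝓝 (f k)) (fun V => ordConnectedComponent (f ⁻¹' V) k) := by
  refine ⟨fun W => ⟨fun hW => ?_, fun ⟨V, hV, hVW⟩ =>
    Filter.mem_of_superset (ordConnectedComponent_mem_nhds.2 (hf.continuousAt hV)) hVW⟩⟩
  have hk_int : k ∈ interior W := mem_interior_iff_mem_nhds.2 hW
  obtain ⟨V₁, hV₁, h₁⟩ :=
    exists_nhds_ordConnectedComponent_inter_Iic_subset hk isOpen_interior hk_int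
  obtain ⟨V₂, hV₂, h₂⟩ :=
    exists_nhds_ordConnectedComponent_inter_Ici_subset hk isOpen_interior hk_int
  refine ⟨V₁ ∩ V₂, Filter.inter_mem hV₁ hV₂, fun p hp => interior_subset ?_⟩
  rw [preimage_inter, ordConnectedComponent_inter] at hp
  rcases le_total p k with hpk | hkp
  exacts [h₁ ⟨hp.1, hpk⟩, h₂ ⟨hp.2, hkp⟩]

end

theorem orderLight_char_le_general (K : Type u) (X : Type u) [LinearOrder K] [TopologicalSpace K]
    [OrderTopology K] [CompactSpace K] [TopologicalSpace X] [T2Space X]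
    (f : K → X) (hf : Continuous f)
    (hlight : OrderLight f) :
    ∀ k : K, nhdsChar K k ≤ nhdsChar X (f k) := fun k =>
  nhdsChar_le_of_hasBasis (fun _ _ h => ordConnectedComponent_mono (preimage_mono h) k)
    (hasBasis_nhds_ordConnectedComponent_preimage hf (hlight.ordConnectedComponent_fiber_eq k))

theorem orderLight_char_le (K : Type u) (X : Type u) [LinearOrder K] [TopologicalSpace K]
    [OrderTopology K] [CompactSpace K] [TopologicalSpace X] [T2Space X]
    (f : K → X) (hf : Continuous f) (hsurj : Function.Surjective f)
    (hlight : OrderLight f) :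
    ∀ k : K, nhdsChar K k ≤ nhdsChar X (f k) :=
  orderLight_char_le_general K X f hf hlight
end

section
/- Every first countable Hausdorff space which is a continuous image of some compact linearly ordered topological space is a continuous image of some first countable compact linearly ordered topological space. -/
universe u

open Set Topology

/-!
Collapse every maximal interval of `K` on which `f` is constant to a point. The quotient `Q` is
again a compact LOTS, `f` factors through it as `g : Q → X`, and `g` is constant on no
nondegenerate interval `[a, b]`. Given `ℓ ∈ Q` and a countable base `V n` at `g ℓ`, choose
`a n < ℓ` with `g (Ioc (a n) ℓ) ⊆ V n`. The `a n` are cofinal below `ℓ`: if all of them lay below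
some `b < ℓ`, then `g = g ℓ` on all of `[b, ℓ]`, since `X` is T1. Arguing symmetrically on the
right shows that `Q` is first countable.
-/
open Filter Function OrderDual

theorem Filter.isCountablyGenerated_biInf_principal_Ioi {α : Type*} [Preorder α] {s A : Set α}
    (hA : A.Countable) (hAs : A ⊆ s) (hcof : ∀ b ∈ s, ∃ a ∈ A, b ≤ a) :
    (⨅ b ∈ s, 𝓟 (Ioi b)).IsCountablyGenerated := by
  have hcofinal : ⨅ b ∈ s, 𝓟 (Ioi b) = ⨅ t ∈ Ioi '' A, 𝓟 t := by
    rw [iInf_image]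
    refine le_antisymm (le_iInf₂ fun a ha => iInf₂_le a (hAs ha)) (le_iInf₂ fun b hb => ?_)
    obtain ⟨a, haA, hba⟩ := hcof b hb
    exact iInf₂_le_of_le a haA (principal_mono.2 (Ioi_subset_Ioi hba))
  rw [hcofinal]
  exact isCountablyGenerated_biInf_principal (hA.image _)

section Closed

variable {K X : Type*} [LinearOrder K] [TopologicalSpace K] [OrderClosedTopology K]
  [TopologicalSpace X] [T1Space X] {f : K → X}

theorem isClosed_setOf_subsingleton_image_Icc_left (hf : Continuous f) (y : K) :
    IsClosed {x | (f '' Icc x y).Subsingleton} := by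
  have nontrivial_of_ne : ∀ w z, w ≤ z → z ≤ y → f z ≠ f y → (f '' Icc w y).Nontrivial :=
    fun w z hwz hzy hz => ⟨f z, mem_image_of_mem f ⟨hwz, hzy⟩,
      f y, mem_image_of_mem f ⟨hwz.trans hzy, le_rfl⟩, hz⟩
  rw [← isOpen_compl_iff, isOpen_iff_mem_nhds]
  intro x hx
  obtain ⟨_, ⟨z, ⟨hxz, hzy⟩, rfl⟩, hz⟩ := (not_subsingleton_iff.1 hx).exists_ne (f y)
  rcases hxz.lt_or_eq with hxz | rfl
  · filter_upwards [Iio_mem_nhds hxz] with w hw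
    exact (nontrivial_of_ne w z hw.le hzy hz).not_subsingleton
  · have hxy : x < y := hzy.lt_of_ne fun h => hz (h ▸ rfl)
    filter_upwards [Iio_mem_nhds hxy, hf.continuousAt (isOpen_compl_singleton.mem_nhds hz)]
      with w hwy hw
    exact (nontrivial_of_ne w w le_rfl hwy.le hw).not_subsingleton

theorem isClosed_setOf_subsingleton_image_Icc_right (hf : Continuous f) (y : K) :
    IsClosed {x | (f '' Icc y x).Subsingleton} := by
  have h := (isClosed_setOf_subsingleton_image_Icc_left (K := Kᵒᵈ) (f := f ∘ ofDual) hf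
    (toDual y)).preimage continuous_toDual
  simpa only [preimage_ofPred_eq, Icc_toDual, image_comp, Equiv.image_preimage] using h

end Closed

section FirstCountable

variable {L X : Type*} [LinearOrder L] [TopologicalSpace L] [OrderTopology L]
  [TopologicalSpace X] [T1Space X] [FirstCountableTopology X] {g : L → X}

theorem exists_countable_cofinal_Iio_of_nontrivial_image_Icc (hg : Continuous g)
    (hlight : ∀ ⦃a b⦄, a < b → (g '' Icc a b).Nontrivial) (ℓ : L) :
    ∃ A : Set L, A.Countable ∧ A ⊆ Iio ℓ ∧ ∀ b ∈ Iio ℓ, ∃ a ∈ A, b ≤ a := by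
  rcases (Iio ℓ).eq_empty_or_nonempty with hempty | ⟨l, hl⟩
  · exact ⟨∅, countable_empty, empty_subset _, by simp [hempty]⟩
  obtain ⟨V, hV⟩ := (𝓝 (g ℓ)).exists_antitone_basis
  choose a ha hsub using fun n =>
    exists_Ioc_subset_of_mem_nhds (hg.continuousAt (hV.mem n)) ⟨l, hl⟩
  refine ⟨range a, countable_range a, range_subset_iff.2 ha, fun b hb => ?_⟩
  by_contra! hlt
  obtain ⟨_, ⟨x, ⟨hbx, hxℓ⟩, rfl⟩, hx⟩ := (hlight hb).exists_ne (g ℓ)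
  obtain ⟨n, -, hn⟩ := hV.1.mem_iff.1 (isOpen_compl_singleton.mem_nhds (Ne.symm hx))
  exact hn (hsub n ⟨(hlt _ ⟨n, rfl⟩).trans_le hbx, hxℓ⟩) rfl

theorem firstCountableTopology_of_nontrivial_image_Icc (hg : Continuous g)
    (hlight : ∀ ⦃a b⦄, a < b → (g '' Icc a b).Nontrivial) : FirstCountableTopology L := by
  refine ⟨fun ℓ => ?_⟩
  obtain ⟨A, hA, hAℓ, hAcof⟩ := exists_countable_cofinal_Iio_of_nontrivial_image_Icc hg hlight ℓ
  obtain ⟨B, hB, hBℓ, hBcof⟩ := exists_countable_cofinal_Iio_of_nontrivial_image_Icc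
    (L := Lᵒᵈ) (g := g ∘ ofDual) hg (fun a b h => by
      rw [← toDual_ofDual a, ← toDual_ofDual b, Icc_toDual, image_comp, Equiv.image_preimage]
      exact hlight h) (toDual ℓ)
  have := isCountablyGenerated_biInf_principal_Ioi hA hAℓ hAcof
  have : (⨅ b ∈ Ioi ℓ, 𝓟 (Iio b)).IsCountablyGenerated :=
    isCountablyGenerated_biInf_principal_Ioi hB hBℓ hBcof
  rw [nhds_eq_order]
  infer_instance

end FirstCountable

noncomputable section

variable {K X : Type*} [LinearOrder K]

/-- `K` preordered by `a ≤ b` iff `f` is constant on `Icc b a` (in particular whenever `a ≤ b`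
in `K`); its antisymmetrization collapses the maximal intervals on which `f` is constant. -/
def ConstCollapse (_f : K → X) : Type _ := K

instance (f : K → X) : Preorder (ConstCollapse f) where
  le (a b : K) := (f '' Icc b a).Subsingleton
  le_refl (a : K) := (subsingleton_Icc_of_ge le_rfl).image f
  le_trans (a b c : K) (hab : (f '' Icc b a).Subsingleton) (hbc : (f '' Icc c b).Subsingleton) := by
    rcases le_total b a with hba | hab'
    · rcases le_total c b with hcb | hbc'
      · rw [← Icc_union_Icc_eq_Icc hcb hba, image_union,
          hbc.eq_singleton_of_mem (mem_image_of_mem f (right_mem_Icc.2 hcb)),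
          hab.eq_singleton_of_mem (mem_image_of_mem f (left_mem_Icc.2 hba)), union_self]
        exact subsingleton_singleton
      · exact hab.anti (image_mono (Icc_subset_Icc_left hbc'))
    · exact hbc.anti (image_mono (Icc_subset_Icc_right hab'))

instance (f : K → X) : Std.Total (α := ConstCollapse f) (· ≤ ·) :=
  ⟨fun (a b : K) => (le_total a b).imp (fun h => (subsingleton_Icc_of_ge h).image f)
    (fun h => (subsingleton_Icc_of_ge h).image f)⟩

instance (f : K → X) : DecidableLE (ConstCollapse f) := Classical.decRel _

instance (f : K → X) : DecidableLT (ConstCollapse f) := Classical.decRel _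

def ConstQuotient (f : K → X) : Type _ := Antisymmetrization (ConstCollapse f) (· ≤ ·)

namespace ConstQuotient

variable (f : K → X)

instance : LinearOrder (ConstQuotient f) :=
  inferInstanceAs (LinearOrder (Antisymmetrization (ConstCollapse f) (· ≤ ·)))

instance : TopologicalSpace (ConstQuotient f) := Preorder.topology _

instance : OrderTopology (ConstQuotient f) := ⟨rfl⟩

def mk (a : K) : ConstQuotient f := toAntisymmetrization (α := ConstCollapse f) (· ≤ ·) a

def lift : ConstQuotient f → X :=
  Quotient.lift (s := AntisymmRel.setoid (ConstCollapse f) (· ≤ ·)) f fun a b hab => by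
    rcases le_total (α := K) a b with h | h
    · exact hab.2 (mem_image_of_mem f (left_mem_Icc.2 h)) (mem_image_of_mem f (right_mem_Icc.2 h))
    · exact hab.1 (mem_image_of_mem f (right_mem_Icc.2 h)) (mem_image_of_mem f (left_mem_Icc.2 h))

theorem mk_surjective : Surjective (mk f) := Quotient.mk_surjective

theorem lift_surjective (hf : Surjective f) : Surjective (lift f) :=
  Surjective.of_comp (g := mk f) hf

theorem mk_le_mk {a b : K} : mk f a ≤ mk f b ↔ (f '' Icc b a).Subsingleton := Iff.rfl

theorem mk_lt_mk {a b : K} : mk f a < mk f b ↔ (f '' Icc a b).Nontrivial := by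
  rw [← not_le, mk_le_mk, not_subsingleton_iff]

theorem monotone_mk : Monotone (mk f) := fun _ _ h => (subsingleton_Icc_of_ge h).image f

theorem nontrivial_lift_image_Icc {p q : ConstQuotient f} (hpq : p < q) :
    (lift f '' Icc p q).Nontrivial := by
  obtain ⟨a, rfl⟩ := mk_surjective f p
  obtain ⟨b, rfl⟩ := mk_surjective f q
  refine ((mk_lt_mk f).1 hpq).mono ?_
  rintro _ ⟨z, hz, rfl⟩
  exact ⟨mk f z, ⟨monotone_mk f hz.1, monotone_mk f hz.2⟩, rfl⟩

variable [TopologicalSpace K] [OrderClosedTopology K] [TopologicalSpace X] [T1Space X] {f}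

theorem continuous_mk (hf : Continuous f) : Continuous (mk f) := by
  refine continuous_generateFrom_iff.2 ?_
  rintro _ ⟨p, rfl | rfl⟩ <;> obtain ⟨y, rfl⟩ := mk_surjective f p
  · have : mk f ⁻¹' Ioi (mk f y) = {x | (f '' Icc y x).Subsingleton}ᶜ := by
      ext x; exact (mk_lt_mk f).trans not_subsingleton_iff.symm
    exact this ▸ (isClosed_setOf_subsingleton_image_Icc_right hf y).isOpen_compl
  · have : mk f ⁻¹' Iio (mk f y) = {x | (f '' Icc x y).Subsingleton}ᶜ := by
      ext x; exact (mk_lt_mk f).trans not_subsingleton_iff.symm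
    exact this ▸ (isClosed_setOf_subsingleton_image_Icc_left hf y).isOpen_compl

variable [CompactSpace K]

theorem compactSpace (hf : Continuous f) : CompactSpace (ConstQuotient f) :=
  ⟨(mk_surjective f).range_eq ▸ isCompact_range (continuous_mk hf)⟩

theorem continuous_lift (hf : Continuous f) : Continuous (lift f) :=
  ((continuous_mk hf).isClosedMap.isQuotientMap (continuous_mk hf)
    (mk_surjective f)).continuous_iff.2 hf

end ConstQuotient

end

theorem image_of_firstCountable_compact_LOTS (X : Type u) [TopologicalSpace X] [T2Space X]
    [FirstCountableTopology X] (hX : ContinuousImageOfCompactLOTS X) :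
    ∃ (K : Type u) (lo : LinearOrder K) (tK : TopologicalSpace K),
      letI := lo; letI := tK;
      OrderTopology K ∧ CompactSpace K ∧ FirstCountableTopology K ∧
        ∃ f : K → X, Continuous f ∧ Function.Surjective f := by
  obtain ⟨K, _, _, _, _, f, hf, hsurj⟩ := hX
  exact ⟨ConstQuotient f, inferInstance, inferInstance, inferInstance,
    ConstQuotient.compactSpace hf,
    firstCountableTopology_of_nontrivial_image_Icc (ConstQuotient.continuous_lift hf)
      fun _ _ => ConstQuotient.nontrivial_lift_image_Icc f,
    ConstQuotient.lift f, ConstQuotient.continuous_lift hf, ConstQuotient.lift_surjective f hsurj⟩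
end

section
/- Every separable Hausdorff space which is a continuous image of some compact linearly ordered topological space is a continuous image of some separable compact linearly ordered topological space. -/
universe u

open Set Topology

/-- The order topology (as a topology) on a preorder. -/
def auxOrdTop (α : Type u) [Preorder α] : TopologicalSpace α :=
  TopologicalSpace.generateFrom {s : Set α | ∃ a, s = Ioi a ∨ s = Iio a}

/-- A compact subset of a LOTS is a LOTS in the subspace topology. -/
theorem aux_compact_subtype_orderTopology {K : Type u} [LinearOrder K] [TopologicalSpace K]
    [OrderTopology K] {C : Set K} (hcomp : IsCompact C) :
    OrderTopology ↥C := by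
  haveI : CompactSpace ↥C := isCompact_iff_compactSpace.mp hcomp
  have hot2 : @OrderTopology ↥C (auxOrdTop ↥C) _ := @OrderTopology.mk _ (auxOrdTop ↥C) _ rfl
  have ht2 : @T2Space ↥C (auxOrdTop ↥C) :=
    @OrderClosedTopology.to_t2Space ↥C (auxOrdTop ↥C) _
      (@OrderTopology.to_orderClosedTopology ↥C (auxOrdTop ↥C) _ hot2)
  have h12 : (instTopologicalSpaceSubtype : TopologicalSpace ↥C) ≤ auxOrdTop ↥C := by
    apply le_generateFrom
    rintro s ⟨a, rfl | rfl⟩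
    · have h : (Ioi a : Set ↥C) = Subtype.val ⁻¹' Ioi (a : K) := rfl
      rw [h]
      exact IsOpen.preimage continuous_subtype_val isOpen_Ioi
    · have h : (Iio a : Set ↥C) = Subtype.val ⁻¹' Iio (a : K) := rfl
      rw [h]
      exact IsOpen.preimage continuous_subtype_val isOpen_Iio
  have hcid : @Continuous ↥C ↥C _ (auxOrdTop ↥C) id := continuous_id_of_le h12
  have hclosed : @IsClosedMap ↥C ↥C _ (auxOrdTop ↥C) id :=
    @Continuous.isClosedMap ↥C ↥C _ (auxOrdTop ↥C) _ ht2 id hcid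
  have h21 : auxOrdTop ↥C ≤ (instTopologicalSpaceSubtype : TopologicalSpace ↥C) := by
    intro s hs
    have h1 : @IsClosed ↥C (auxOrdTop ↥C) (id '' sᶜ) :=
      hclosed _ (isClosed_compl_iff.mpr hs)
    rw [image_id] at h1
    have h2 := @IsClosed.isOpen_compl ↥C (auxOrdTop ↥C) _ h1
    simpa using h2
  exact ⟨le_antisymm h12 h21⟩

theorem image_of_separable_compact_LOTS (X : Type u) [TopologicalSpace X] [T2Space X]
    [TopologicalSpace.SeparableSpace X] (hX : ContinuousImageOfCompactLOTS X) :
    ∃ (K : Type u) (lo : LinearOrder K) (tK : TopologicalSpace K),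
      letI := lo; letI := tK;
      OrderTopology K ∧ CompactSpace K ∧ TopologicalSpace.SeparableSpace K ∧
        ∃ f : K → X, Continuous f ∧ Function.Surjective f := by
  obtain ⟨K, lo, tK, ht, hK, f, hf, hfs⟩ := hX
  letI := lo; letI := tK
  obtain ⟨D, hDc, hDd⟩ := TopologicalSpace.exists_countable_dense X
  set g : X → K := Function.surjInv hfs with hg
  have hgf : ∀ x, f (g x) = x := Function.surjInv_eq hfs
  set S : Set K := g '' D with hS
  have hSc : S.Countable := hDc.image g
  set C : Set K := closure S with hC
  have hCc : IsClosed C := isClosed_closure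
  have hSC : S ⊆ C := subset_closure
  have hCcomp : IsCompact C := hCc.isCompact
  haveI hcs : CompactSpace ↥C := isCompact_iff_compactSpace.mp hCcomp
  haveI hot1 : OrderTopology ↥C := aux_compact_subtype_orderTopology hCcomp
  refine ⟨↥C, inferInstance, inferInstance, hot1, hcs, ?_,
    fun c => f c, hf.comp continuous_subtype_val, ?_⟩
  · refine ⟨⟨Subtype.val ⁻¹' S, hSc.preimage Subtype.val_injective, ?_⟩⟩
    intro x
    rw [closure_subtype]
    have himg : (Subtype.val : ↥C → K) '' (Subtype.val ⁻¹' S) = S := by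
      rw [Subtype.image_preimage_coe]
      exact inter_eq_right.mpr hSC
    rw [himg]
    exact x.2
  · intro x
    have hDsub : D ⊆ f '' C := fun d hd => ⟨g d, hSC ⟨d, hd, rfl⟩, hgf d⟩
    have himg : IsClosed (f '' C) := (hCcomp.image hf).isClosed
    have hsub : (univ : Set X) ⊆ f '' C := by
      rw [← hDd.closure_eq, ← himg.closure_eq]
      exact closure_mono hDsub
    obtain ⟨c, hc, hfc⟩ := hsub (mem_univ x)
    exact ⟨⟨c, hc⟩, hfc⟩
end

section
/- Let f : K → X be a continuous irreducible surjection between compact Hausdorff spaces, and let B ⊆ K be a subset such that f⁻¹(f(b)) = {b} for every b ∈ B. Then the restriction f|_B : B → f(B) is an open map (where B and f(B) carry the subspace topologies), and hence is a homeomorphism of B onto f(B). -/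
universe u

open Set Topology

/-! A continuous map from a compact space to a Hausdorff space is closed. Since each point of `B`
is alone in its fibre, for open `U` the image `f (U ∩ B)` is `f B` minus the closed set `f (K \ U)`,
hence relatively open in `f B`; a continuous open bijection is a homeomorphism. -/

theorem image_inter_eq_inter_compl_image_compl {K X : Type*} {f : K → X} {B : Set K}
    (hB : ∀ b ∈ B, f ⁻¹' {f b} = {b}) (U : Set K) :
    f '' (U ∩ B) = f '' B ∩ (f '' Uᶜ)ᶜ := by
  ext y
  constructor
  · rintro ⟨b, ⟨hbU, hbB⟩, rfl⟩
    refine ⟨mem_image_of_mem f hbB, ?_⟩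
    rintro ⟨k, hkU, hfk⟩
    have hkb : k ∈ f ⁻¹' {f b} := hfk
    rw [hB b hbB, mem_singleton_iff] at hkb
    exact hkU (hkb ▸ hbU)
  · rintro ⟨⟨b, hbB, rfl⟩, hbU⟩
    exact ⟨b, ⟨by_contra fun hb ↦ hbU (mem_image_of_mem f hb), hbB⟩, rfl⟩

theorem injOn_of_preimage_singleton {K X : Type*} {f : K → X} {B : Set K}
    (hB : ∀ b ∈ B, f ⁻¹' {f b} = {b}) : InjOn f B := fun a ha b _ hab ↦
  (mem_singleton_iff.mp ((hB a ha).subset (show b ∈ f ⁻¹' {f a} from hab.symm))).symm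

theorem IsClosedMap.isOpenMap_imageFactorization {K X : Type*} [TopologicalSpace K]
    [TopologicalSpace X] {f : K → X} (hf : IsClosedMap f) {B : Set K}
    (hB : ∀ b ∈ B, f ⁻¹' {f b} = {b}) : IsOpenMap (imageFactorization f B) := by
  rintro _ ⟨U, hU, rfl⟩
  refine ⟨(f '' Uᶜ)ᶜ, (hf _ hU.isClosed_compl).isOpen_compl, ?_⟩
  ext ⟨y, hy⟩
  have hmem := congrArg (y ∈ ·) (image_inter_eq_inter_compl_image_compl hB U)
  simp only [mem_image, mem_inter_iff, mem_compl_iff, eq_iff_iff] at hmem hy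
  simpa [imageFactorization, hy, and_assoc] using hmem.symm

theorem irreducible_restriction_open_general (K : Type*) (X : Type*) [TopologicalSpace K]
    [TopologicalSpace X] [CompactSpace K] [T2Space X]
    (f : K → X) (hf : Continuous f)
    (B : Set K) (hB : ∀ b ∈ B, f ⁻¹' {f b} = {b}) :
    IsOpenMap (Set.imageFactorization f B) ∧ IsHomeomorph (Set.imageFactorization f B) := by
  have hopen := hf.isClosedMap.isOpenMap_imageFactorization hB
  refine ⟨hopen, (hf.comp continuous_subtype_val).subtype_mk _, hopen,
    (injOn_of_preimage_singleton hB).imageFactorization_injective,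
    imageFactorization_surjective⟩

theorem irreducible_restriction_open (K : Type*) (X : Type*) [TopologicalSpace K]
    [TopologicalSpace X] [CompactSpace K] [CompactSpace X] [T2Space K] [T2Space X]
    (f : K → X) (hf : Continuous f) (hirr : IsIrreducibleMap f)
    (B : Set K) (hB : ∀ b ∈ B, f ⁻¹' {f b} = {b}) :
    IsOpenMap (Set.imageFactorization f B) ∧ IsHomeomorph (Set.imageFactorization f B) :=
  irreducible_restriction_open_general K X f hf B hB
end

section
/- Let K be a compact linearly ordered topological space, let G and H be disjoint closed subsets of K, and let 𝒞 be a pairwise disjoint family of convex subsets of K. Then only finitely many members C ∈ 𝒞 satisfy both C ∩ G ≠ ∅ and C ∩ H ≠ ∅. (In particular, every pairwise disjoint family of convex subsets of a compact LOTS is a null family.) -/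
universe u

open Set Topology

/-!
Cover the compact set `G` by finitely many order components `U` of `Hᶜ`. A member of `𝒞`
meeting both `G` and `H` meets some such `U` and leaves it. Two pairwise disjoint convex sets
cannot both leave a convex set `U` on the same side: both would contain the larger (or smaller)
of their points in `U`. So each `U` is left by at most two members of `𝒞`.
-/

namespace Set

variable {α : Type*} [LinearOrder α] {U : Set α} {𝒞 : Set (Set α)}

theorem OrdConnected.le_of_le_of_notMem (hU : U.OrdConnected) {g g' h : α} (hg : g ∈ U)
    (hg' : g' ∈ U) (hh : h ∉ U) (hgh : g ≤ h) : g' ≤ h :=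
  le_of_not_gt fun hlt => hh (hU.out hg hg' ⟨hgh, hlt.le⟩)

theorem OrdConnected.subsingleton_setOf_exits_above (hU : U.OrdConnected)
    (hconv : ∀ C ∈ 𝒞, C.OrdConnected) (hdisj : 𝒞.PairwiseDisjoint id) :
    {C ∈ 𝒞 | ∃ g ∈ C ∩ U, ∃ h ∈ C \ U, g ≤ h}.Subsingleton := by
  rintro C ⟨hC, g, ⟨hgC, hgU⟩, h, ⟨hhC, hhU⟩, hgh⟩
    C' ⟨hC', g', ⟨hgC', hgU'⟩, h', ⟨hhC', hhU'⟩, hgh'⟩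
  by_contra hne
  have hmemC : max g g' ∈ C := (hconv C hC).out hgC hhC
    ⟨le_max_left _ _, max_le hgh (hU.le_of_le_of_notMem hgU hgU' hhU hgh)⟩
  have hmemC' : max g g' ∈ C' := (hconv C' hC').out hgC' hhC'
    ⟨le_max_right _ _, max_le (hU.le_of_le_of_notMem hgU' hgU hhU' hgh') hgh'⟩
  exact disjoint_left.mp (hdisj hC hC' hne) hmemC hmemC'

theorem OrdConnected.subsingleton_setOf_exits_below (hU : U.OrdConnected)
    (hconv : ∀ C ∈ 𝒞, C.OrdConnected) (hdisj : 𝒞.PairwiseDisjoint id) :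
    {C ∈ 𝒞 | ∃ g ∈ C ∩ U, ∃ h ∈ C \ U, h ≤ g}.Subsingleton :=
  OrdConnected.subsingleton_setOf_exits_above (α := αᵒᵈ) hU.dual
    (fun C hC => (hconv C hC).dual) hdisj

theorem OrdConnected.finite_setOf_inter_nonempty_diff_nonempty (hU : U.OrdConnected)
    (hconv : ∀ C ∈ 𝒞, C.OrdConnected) (hdisj : 𝒞.PairwiseDisjoint id) :
    {C ∈ 𝒞 | (C ∩ U).Nonempty ∧ (C \ U).Nonempty}.Finite := by
  refine ((hU.subsingleton_setOf_exits_above hconv hdisj).finite.union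
    (hU.subsingleton_setOf_exits_below hconv hdisj).finite).subset ?_
  rintro C ⟨hC, ⟨g, hg⟩, ⟨h, hh⟩⟩
  rcases le_total g h with hgh | hhg
  · exact Or.inl ⟨hC, g, hg, h, hh, hgh⟩
  · exact Or.inr ⟨hC, g, hg, h, hh, hhg⟩

end Set

open Set in
theorem IsCompact.finite_setOf_inter_nonempty_inter_nonempty {α : Type*} [LinearOrder α]
    [TopologicalSpace α] [OrderTopology α] {G H : Set α} (hG : IsCompact G) (hH : IsClosed H)
    (hGH : Disjoint G H) {𝒞 : Set (Set α)} (hconv : ∀ C ∈ 𝒞, C.OrdConnected)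
    (hdisj : 𝒞.PairwiseDisjoint id) :
    {C ∈ 𝒞 | (C ∩ G).Nonempty ∧ (C ∩ H).Nonempty}.Finite := by
  obtain ⟨t, -, hGt⟩ := hG.elim_nhds_subcover (fun x => ordConnectedComponent Hᶜ x)
    fun x hx => ordConnectedComponent_mem_nhds.2
      (hH.isOpen_compl.mem_nhds (disjoint_left.mp hGH hx))
  refine (t.finite_toSet.biUnion fun x _ =>
    OrdConnected.finite_setOf_inter_nonempty_diff_nonempty (U := ordConnectedComponent Hᶜ x)
      inferInstance hconv hdisj).subset ?_
  rintro C ⟨hC, ⟨g, hgC, hgG⟩, ⟨h, hhC, hhH⟩⟩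
  obtain ⟨x, hx, hgx⟩ := mem_iUnion₂.mp (hGt hgG)
  exact mem_biUnion hx
    ⟨hC, ⟨g, hgC, hgx⟩, ⟨h, hhC, fun hhx => ordConnectedComponent_subset hhx hhH⟩⟩

theorem convex_family_null (K : Type u) [LinearOrder K] [TopologicalSpace K]
    [OrderTopology K] [CompactSpace K] (G H : Set K) (hG : IsClosed G) (hH : IsClosed H)
    (hGH : Disjoint G H) (𝒞 : Set (Set K)) (hconv : ∀ C ∈ 𝒞, C.OrdConnected)
    (hdisj : 𝒞.PairwiseDisjoint id) :
    {C ∈ 𝒞 | (C ∩ G).Nonempty ∧ (C ∩ H).Nonempty}.Finite :=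
  hG.isCompact.finite_setOf_inter_nonempty_inter_nonempty hH hGH hconv hdisj
end

section
/- Let X be a ccc Hausdorff space which is a continuous image of some compact linearly ordered topological space. Then X is a continuous image of a perfectly normal compact linearly ordered topological space, and X is itself perfectly normal. -/
universe u

open Set Topology

section Cofinal
variable {L : Type*} [LinearOrder L] [TopologicalSpace L] [OrderTopology L]

lemma exists_countable_cofinal (hccc : CCC L) (S : Set L) :
    ∃ T : Set L, T ⊆ S ∧ T.Countable ∧ ∀ x ∈ S, ∃ t ∈ T, x ≤ t := by
  set P : Set (Set L) := {s | s.Nonempty ∧ ∃ u ∈ S, ∃ v ∈ S, s = Ioo u v} with hP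
  have hchainhyp : ∀ c ⊆ {𝒰 : Set (Set L) | 𝒰 ⊆ P ∧ 𝒰.PairwiseDisjoint id},
      IsChain (· ⊆ ·) c → ∃ ub ∈ {𝒰 : Set (Set L) | 𝒰 ⊆ P ∧ 𝒰.PairwiseDisjoint id},
        ∀ s ∈ c, s ⊆ ub := by
    intro c hc hchain
    refine ⟨⋃₀ c, ⟨sUnion_subset fun s hs => (hc hs).1, ?_⟩, fun s hs => subset_sUnion_of_mem hs⟩
    intro a ha b hb hab
    obtain ⟨s1, hs1, ha1⟩ := ha
    obtain ⟨s2, hs2, hb1⟩ := hb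
    rcases hchain.total hs1 hs2 with h | h
    · exact (hc hs2).2 (h ha1) hb1 hab
    · exact (hc hs1).2 ha1 (h hb1) hab
  obtain ⟨𝒰, h𝒰max⟩ := zorn_subset {𝒰 : Set (Set L) | 𝒰 ⊆ P ∧ 𝒰.PairwiseDisjoint id} hchainhyp
  obtain ⟨⟨h𝒰P, h𝒰disj⟩, h𝒰top⟩ := h𝒰max
  have h𝒰cnt : 𝒰.Countable := by
    refine hccc 𝒰 (fun s hs => ?_) h𝒰disj
    obtain ⟨hne, u, _, v, _, rfl⟩ := h𝒰P hs
    exact ⟨isOpen_Ioo, hne⟩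
  have key : ∀ s : ↥𝒰, ∃ v, v ∈ S ∧ (s : Set L) ⊆ Iio v := by
    intro ⟨s, hs⟩
    obtain ⟨hne, u, hu, v, hv, rfl⟩ := h𝒰P hs
    exact ⟨v, hv, Ioo_subset_Iio_self⟩
  choose e he1 he2 using key
  set T₀ : Set L := range e with hT₀
  have hT₀S : T₀ ⊆ S := by rintro _ ⟨s, rfl⟩; exact he1 s
  have hT₀cnt : T₀.Countable := by
    haveI := h𝒰cnt.to_subtype
    exact countable_range e
  set B : Set L := {x | x ∈ S ∧ ∀ t ∈ T₀, t < x} with hB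
  have hB3 : ∀ y ∈ B, ∀ z ∈ B, ∀ w ∈ B, y < z → z < w → False := by
    intro y hy z hz w hw hyz hzw
    have hnew : Ioo y w ∈ P := ⟨⟨z, hyz, hzw⟩, y, hy.1, w, hw.1, rfl⟩
    have hdisj : ∀ s ∈ 𝒰, Disjoint s (Ioo y w) := by
      intro s hs
      have h1 : s ⊆ Iio (e ⟨s, hs⟩) := he2 ⟨s, hs⟩
      have h2 : e ⟨s, hs⟩ < y := hy.2 _ ⟨⟨s, hs⟩, rfl⟩
      exact disjoint_left.2 fun a has ha2 =>
        absurd ha2.1 (not_lt.2 (((h1 has).le.trans h2.le)))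
    have hmem : Ioo y w ∈ 𝒰 := by
      have hins : insert (Ioo y w) 𝒰 ∈
          {𝒰 : Set (Set L) | 𝒰 ⊆ P ∧ 𝒰.PairwiseDisjoint id} := by
        constructor
        · exact insert_subset hnew h𝒰P
        · exact h𝒰disj.insert fun s hs _ => (hdisj s hs).symm
      exact h𝒰top hins (subset_insert _ _) (mem_insert _ _)
    have : Disjoint (Ioo y w) (Ioo y w) := (hdisj _ hmem).symm
    rw [disjoint_self] at this
    exact absurd this (by simp [Set.eq_empty_iff_forall_notMem]; exact ⟨z, hyz, hzw⟩)
  have hBcnt : B.Countable := by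
    by_cases h1 : ∃ y ∈ B, ∃ z ∈ B, y < z
    · obtain ⟨y, hy, z, hz, hyz⟩ := h1
      have hsub : B ⊆ {y, z} := by
        intro w hw
        rcases lt_trichotomy w y with h | h | h
        · exact absurd (hB3 w hw y hy z hz h hyz) not_false
        · exact Or.inl h
        rcases lt_trichotomy w z with h' | h' | h'
        · exact absurd (hB3 y hy w hw z hz h h') not_false
        · exact Or.inr h'
        · exact absurd (hB3 y hy z hz w hw hyz h') not_false
      exact (Set.countable_insert.2 (Set.countable_singleton z)).mono hsub
    · push_neg at h1
      have : B.Subsingleton := by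
        intro a ha b hb
        by_contra hne
        rcases Ne.lt_or_gt hne with h | h
        · exact absurd h (not_lt.2 (h1 a ha b hb))
        · exact absurd h (not_lt.2 (h1 b hb a ha))
      exact this.countable
  refine ⟨T₀ ∪ B, union_subset hT₀S (fun x hx => hx.1), hT₀cnt.union hBcnt, ?_⟩
  intro x hx
  by_cases h : ∃ t ∈ T₀, x ≤ t
  · obtain ⟨t, ht, hxt⟩ := h
    exact ⟨t, Or.inl ht, hxt⟩
  · push_neg at h
    exact ⟨x, Or.inr ⟨hx, fun t ht => h t ht⟩, le_rfl⟩

lemma exists_countable_coinitial (hccc : CCC L) (S : Set L) :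
    ∃ T : Set L, T ⊆ S ∧ T.Countable ∧ ∀ x ∈ S, ∃ t ∈ T, t ≤ x := by
  have hccc' : CCC Lᵒᵈ := hccc
  obtain ⟨T, h1, h2, h3⟩ := exists_countable_cofinal (L := Lᵒᵈ) hccc' (OrderDual.ofDual ⁻¹' S)
  exact ⟨OrderDual.ofDual '' T, by rintro _ ⟨t, ht, rfl⟩; exact h1 ht,
    h2.image _, fun x hx => by
      obtain ⟨t, ht, hxt⟩ := h3 (OrderDual.toDual x) hx
      exact ⟨OrderDual.ofDual t, ⟨t, ht, rfl⟩, hxt⟩⟩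

end Cofinal
section Gdelta
variable {L : Type*} [LinearOrder L] [TopologicalSpace L] [OrderTopology L]

lemma isGδ_of_isClosed_of_ccc (hccc : CCC L) {A : Set L} (hA : IsClosed A) : IsGδ A := by
  set U := Aᶜ with hUdef
  have hU : IsOpen U := hA.isOpen_compl
  set 𝒞 : Set (Set L) := (fun x => ordConnectedComponent U x) '' U with h𝒞
  have hsubU : ∀ c ∈ 𝒞, c ⊆ U := by
    rintro _ ⟨x, hx, rfl⟩
    exact ordConnectedComponent_subset
  have hopen : ∀ c ∈ 𝒞, IsOpen c := by
    rintro _ ⟨x, hx, rfl⟩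
    rw [isOpen_iff_mem_nhds]
    intro y hy
    simp only at hy ⊢
    rw [ordConnectedComponent_eq hy]
    exact ordConnectedComponent_mem_nhds.2 (hU.mem_nhds (ordConnectedComponent_subset hy))
  have hne : ∀ c ∈ 𝒞, c.Nonempty := by
    rintro _ ⟨x, hx, rfl⟩
    exact ⟨x, self_mem_ordConnectedComponent.2 hx⟩
  have hdisj : 𝒞.PairwiseDisjoint id := by
    rintro _ ⟨x, hx, rfl⟩ _ ⟨y, hy, rfl⟩ hneq
    rw [Function.onFun, disjoint_left]
    intro z hzx hzy
    exact hneq ((ordConnectedComponent_eq hzx).trans (ordConnectedComponent_eq hzy).symm)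
  have h𝒞cnt : 𝒞.Countable := hccc 𝒞 (fun c hc => ⟨hopen c hc, hne c hc⟩) hdisj
  have hFsig : ∀ c : ↥𝒞, ∃ G : Set (Set L), G.Countable ∧ (∀ s ∈ G, IsClosed s) ∧ ⋃₀ G = c := by
    rintro ⟨c, x, hx, rfl⟩
    obtain ⟨T, hTc, hTcnt, hTcof⟩ := exists_countable_cofinal hccc (ordConnectedComponent U x)
    obtain ⟨T', hT'c, hT'cnt, hT'coi⟩ := exists_countable_coinitial hccc (ordConnectedComponent U x)
    refine ⟨(fun p : L × L => Icc p.1 p.2) '' (T' ×ˢ T), (hT'cnt.prod hTcnt).image _,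
      ?_, ?_⟩
    · rintro _ ⟨p, _, rfl⟩; exact isClosed_Icc
    · apply Subset.antisymm
      · rintro z ⟨_, ⟨p, ⟨hp1, hp2⟩, rfl⟩, hz⟩
        have hOC : (ordConnectedComponent U x).OrdConnected := inferInstance
        exact hOC.out (hT'c hp1) (hTc hp2) hz
      · intro z hz
        obtain ⟨t, ht, hzt⟩ := hTcof z hz
        obtain ⟨t', ht', ht'z⟩ := hT'coi z hz
        exact ⟨Icc t' t, ⟨(t', t), ⟨ht', ht⟩, rfl⟩, ht'z, hzt⟩
  choose G hGcnt hGcl hGU using hFsig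
  have hA2 : A = ⋂ c : ↥𝒞, ⋂ s ∈ G c, sᶜ := by
    have hU2 : U = ⋃ c : ↥𝒞, ⋃ s ∈ G c, s := by
      apply Subset.antisymm
      · intro z hz
        refine mem_iUnion.2 ⟨⟨ordConnectedComponent U z, z, hz, rfl⟩, ?_⟩
        have : z ∈ ⋃₀ G ⟨ordConnectedComponent U z, z, hz, rfl⟩ := by
          rw [hGU]
          exact self_mem_ordConnectedComponent.2 hz
        obtain ⟨s, hs, hzs⟩ := this
        exact mem_biUnion hs hzs
      · rintro z hz
        obtain ⟨c, hz⟩ := mem_iUnion.1 hz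
        obtain ⟨s, hs, hzs⟩ := mem_iUnion₂.1 hz
        have : z ∈ ⋃₀ G c := ⟨s, hs, hzs⟩
        rw [hGU] at this
        exact hsubU c c.2 this
    rw [← compl_compl A, ← hUdef, hU2]
    simp [compl_iUnion]
  rw [hA2]
  haveI := h𝒞cnt.to_subtype
  exact .iInter fun c => .biInter (hGcnt c) fun s hs => (hGcl c s hs).isOpen_compl.isGδ

end Gdelta
lemma topologies_eq_of_le_of_compact_of_t2 {α : Type*} (t1 t2 : TopologicalSpace α)
    (h : t1 ≤ t2) (hc : @CompactSpace α t1) (ht2 : @T2Space α t2) : t1 = t2 := by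
  apply le_antisymm h
  rw [← isOpen_implies_isOpen_iff]
  intro s hs
  rw [← @isClosed_compl_iff α t2 s]
  have h1 : @IsClosed α t1 sᶜ := @isClosed_compl_iff α t1 s |>.2 hs
  have h2 : @IsCompact α t1 sᶜ := @IsClosed.isCompact α t1 sᶜ hc h1
  have h3 : @IsCompact α t2 sᶜ := by
    have hcont : Continuous[t1, t2] id := continuous_id_iff_le.2 h
    have := @IsCompact.image α α t1 t2 sᶜ id h2 hcont
    rwa [Set.image_id] at this
  exact @IsCompact.isClosed α t2 ht2 sᶜ h3

lemma orderTopology_subtype_of_isClosed {K : Type*} [LinearOrder K] [TopologicalSpace K]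
    [OrderTopology K] [CompactSpace K] {A : Set K} (hA : IsClosed A) :
    OrderTopology ↥A := by
  constructor
  set t2 : TopologicalSpace ↥A :=
    TopologicalSpace.generateFrom {s : Set ↥A | ∃ a : ↥A, s = Ioi a ∨ s = Iio a} with ht2
  set t1 : TopologicalSpace ↥A := instTopologicalSpaceSubtype with ht1
  have h12 : t1 ≤ t2 := by
    apply le_generateFrom
    rintro s ⟨a, rfl | rfl⟩
    · have : (Ioi a : Set ↥A) = Subtype.val ⁻¹' Ioi (a : K) := rfl
      rw [this]
      exact (isOpen_Ioi).preimage continuous_subtype_val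
    · have : (Iio a : Set ↥A) = Subtype.val ⁻¹' Iio (a : K) := rfl
      rw [this]
      exact (isOpen_Iio).preimage continuous_subtype_val
  refine topologies_eq_of_le_of_compact_of_t2 t1 t2 h12 ?_ ?_
  · exact isCompact_iff_compactSpace.1 hA.isCompact
  · letI := t2
    haveI hOT : @OrderTopology ↥A t2 _ := ⟨rfl⟩
    exact inferInstance
lemma isGδ_image_of_isClosedMap {α X : Type*} [TopologicalSpace α] [TopologicalSpace X]
    {g : α → X} (hcont : Continuous g) (hcl : IsClosedMap g) (hsurj : Function.Surjective g)
    (hGδ : ∀ C : Set α, IsClosed C → IsGδ C) {F : Set X} (hF : IsClosed F) : IsGδ F := by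
  obtain ⟨T, hTo, hTcnt, hTeq⟩ := hGδ _ (hF.preimage hcont)
  have hFeq : F = ⋂ t ∈ T, (g '' tᶜ)ᶜ := by
    ext x
    constructor
    · intro hxF
      refine mem_iInter₂.2 fun t ht hmem => ?_
      obtain ⟨k, hk, hkx⟩ := hmem
      apply hk
      have : k ∈ g ⁻¹' F := by rw [mem_preimage, hkx]; exact hxF
      rw [hTeq] at this
      exact this t ht
    · intro hx
      obtain ⟨k, rfl⟩ := hsurj x
      by_contra hxF
      have hk : k ∉ g ⁻¹' F := hxF
      rw [hTeq] at hk
      obtain ⟨t, ht, hkt⟩ : ∃ t ∈ T, k ∉ t := by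
        by_contra h
        push_neg at h
        exact hk fun t ht => h t ht
      exact mem_iInter₂.1 hx t ht ⟨k, hkt, rfl⟩
  rw [hFeq]
  exact IsGδ.biInter_of_isOpen hTcnt fun t ht =>
    (hcl _ (hTo t ht).isClosed_compl).isOpen_compl

lemma ccc_of_irreducible {α X : Type*} [TopologicalSpace α] [TopologicalSpace X]
    {g : α → X} (hcl : IsClosedMap g) (hsurj : Function.Surjective g)
    (hirr : ∀ C : Set α, IsClosed C → g '' C = univ → C = univ)
    (hccc : CCC X) : CCC α := by
  intro 𝒰 hop hdisj
  set Φ : Set α → Set X := fun U => (g '' Uᶜ)ᶜ with hΦ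
  have hkey : ∀ U ∈ 𝒰, g ⁻¹' (Φ U) ⊆ U := by
    intro U hU k hk
    by_contra hkU
    exact hk (mem_image_of_mem g hkU)
  have hopΦ : ∀ U ∈ 𝒰, IsOpen (Φ U) := fun U hU =>
    (hcl _ (hop U hU).1.isClosed_compl).isOpen_compl
  have hneΦ : ∀ U ∈ 𝒰, (Φ U).Nonempty := by
    intro U hU
    rcases eq_empty_or_nonempty (Φ U) with h | h
    · exfalso
      have h2 : g '' Uᶜ = univ := compl_empty_iff.1 h
      have h3 := hirr _ (hop U hU).1.isClosed_compl h2
      obtain ⟨u, hu⟩ := (hop U hU).2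
      exact (h3 ▸ mem_univ u : u ∈ Uᶜ) hu
    · exact h
  have hdisj2 : ∀ U ∈ 𝒰, ∀ V ∈ 𝒰, U ≠ V → Disjoint (Φ U) (Φ V) := by
    intro U hU V hV hUV
    rw [disjoint_left]
    intro x hxU hxV
    obtain ⟨k, rfl⟩ := hsurj x
    have h1 : k ∈ U := hkey U hU hxU
    have h2 : k ∈ V := hkey V hV hxV
    have := hdisj hU hV hUV
    rw [Function.onFun, disjoint_left] at this
    exact this h1 h2
  have hinj : InjOn Φ 𝒰 := by
    intro U hU V hV hUV
    by_contra hne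
    obtain ⟨x, hx⟩ := hneΦ U hU
    exact (hdisj2 U hU V hV hne).ne_of_mem hx (hUV ▸ hx) rfl
  have himg : (Φ '' 𝒰).Countable := by
    refine hccc _ ?_ ?_
    · rintro _ ⟨U, hU, rfl⟩; exact ⟨hopΦ U hU, hneΦ U hU⟩
    · rintro _ ⟨U, hU, rfl⟩ _ ⟨V, hV, rfl⟩ hne
      exact hdisj2 U hU V hV fun h => hne (h ▸ rfl)
  exact Set.countable_of_injective_of_countable_image hinj himg
theorem ccc_image_perfectlyNormal (X : Type u) [TopologicalSpace X] [T2Space X]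
    (hccc : CCC X) (hX : ContinuousImageOfCompactLOTS X) :
    (∃ (K : Type u) (lo : LinearOrder K) (tK : TopologicalSpace K),
      letI := lo; letI := tK;
      OrderTopology K ∧ CompactSpace K ∧ PerfNormal K ∧
        ∃ f : K → X, Continuous f ∧ Function.Surjective f) ∧
    PerfNormal X := by
  obtain ⟨K, lo, tK, hOT, hKcomp, f, hfc, hfs⟩ := hX
  letI := lo; letI := tK
  haveI := hOT; haveI := hKcomp
  haveI : CompactSpace X := ⟨by rw [← hfs.range_eq]; exact isCompact_range hfc⟩
  set 𝒮 : Set (Set K) := {A | IsClosed A ∧ f '' A = univ} with h𝒮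
  have hzorn : ∀ c ⊆ 𝒮, IsChain (· ⊆ ·) c → ∃ lb ∈ 𝒮, ∀ s ∈ c, lb ⊆ s := by
    intro c hc hchain
    rcases eq_empty_or_nonempty c with rfl | hcne
    · exact ⟨univ, ⟨isClosed_univ, by rw [image_univ, hfs.range_eq]⟩, by simp⟩
    · refine ⟨⋂₀ c, ⟨isClosed_sInter fun s hs => (hc hs).1, ?_⟩,
        fun s hs => sInter_subset_of_mem hs⟩
      apply eq_univ_of_forall
      intro x
      haveI : Nonempty ↥c := hcne.to_subtype
      have hne : (⋂ s : ↥c, ((s : Set K) ∩ f ⁻¹' {x})).Nonempty := by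
        apply IsCompact.nonempty_iInter_of_directed_nonempty_isCompact_isClosed
        · rintro ⟨s, hs⟩ ⟨t, ht⟩
          rcases hchain.total hs ht with h | h
          · exact ⟨⟨s, hs⟩, Subset.rfl, inter_subset_inter_left _ h⟩
          · exact ⟨⟨t, ht⟩, inter_subset_inter_left _ h, Subset.rfl⟩
        · rintro ⟨s, hs⟩
          have : x ∈ f '' s := (hc hs).2 ▸ mem_univ x
          obtain ⟨k, hks, hkx⟩ := this
          exact ⟨k, hks, by simpa using hkx⟩
        · rintro ⟨s, hs⟩
          exact ((hc hs).1.inter (isClosed_singleton.preimage hfc)).isCompact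
        · rintro ⟨s, hs⟩
          exact (hc hs).1.inter (isClosed_singleton.preimage hfc)
      obtain ⟨k, hk⟩ := hne
      have hk1 : k ∈ ⋂₀ c := by
        rw [sInter_eq_iInter]
        exact mem_iInter.2 fun s => (mem_iInter.1 hk s).1
      have hk2 : f k = x := by
        have := (mem_iInter.1 hk ⟨hcne.some, hcne.some_mem⟩).2
        simpa using this
      exact ⟨k, hk1, hk2⟩
  obtain ⟨A, hAmin⟩ := zorn_superset 𝒮 hzorn
  obtain ⟨hAcl, hAim⟩ := hAmin.1
  haveI : CompactSpace ↥A := isCompact_iff_compactSpace.1 hAcl.isCompact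
  haveI hAOT : OrderTopology ↥A := orderTopology_subtype_of_isClosed hAcl
  set g : ↥A → X := fun a => f a with hg
  have hgc : Continuous g := hfc.comp continuous_subtype_val
  have hgs : Function.Surjective g := by
    intro x
    have : x ∈ f '' A := hAim ▸ mem_univ x
    obtain ⟨k, hkA, hk⟩ := this
    exact ⟨⟨k, hkA⟩, hk⟩
  have hgcl : IsClosedMap g := hgc.isClosedMap
  have hirr : ∀ C : Set ↥A, IsClosed C → g '' C = univ → C = univ := by
    intro C hCcl hCim
    have h1 : IsClosed (Subtype.val '' C : Set K) :=
      (hCcl.isCompact.image continuous_subtype_val).isClosed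
    have h2 : f '' (Subtype.val '' C) = univ := by
      rw [← image_comp]; exact hCim
    have h3 : Subtype.val '' C ⊆ A := by rintro _ ⟨k, _, rfl⟩; exact k.2
    have h4 : A ⊆ Subtype.val '' C := hAmin.2 ⟨h1, h2⟩ h3
    apply eq_univ_of_forall
    intro a
    obtain ⟨b, hb, hba⟩ := h4 a.2
    rwa [← Subtype.coe_injective hba]
  have hcccA : CCC ↥A := ccc_of_irreducible hgcl hgs hirr hccc
  have hGδA : ∀ C : Set ↥A, IsClosed C → IsGδ C := fun C hC =>
    isGδ_of_isClosed_of_ccc hcccA hC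
  constructor
  · exact ⟨↥A, inferInstance, inferInstance, hAOT, inferInstance,
      ⟨inferInstance, hGδA⟩, g, hgc, hgs⟩
  · exact ⟨inferInstance, fun F hF => isGδ_image_of_isClosedMap hgc hgcl hgs hGδA hF⟩
end

section
/- Assume Souslin's Hypothesis, i.e. that every ccc linearly ordered topological space is separable. Then every ccc compact Hausdorff space which is a continuous image of some compact linearly ordered topological space has a dense metrizable subspace. -/
universe u

open Set Topology

/-!
Restrict the map `K → X` to a minimal closed subset `M` of `K` still mapping onto `X` (Zorn).
`M` is again a compact LOTS, and the restricted map is irreducible, so `M` inherits the ccc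
from `X`; by Souslin's Hypothesis `M` is separable, hence so is `X`. A separable LOTS is perfectly
normal, so every fibre is a Gδ, hence (the map being closed) every point of `X` is a Gδ, and in a
compact Hausdorff space this gives a countable neighbourhood base. A countable dense subset of
`X` is then a countable, first countable regular space, hence second countable and metrizable.
-/

open TopologicalSpace Filter

section LinearOrder

variable {L : Type*} [LinearOrder L] [TopologicalSpace L] [OrderTopology L]

theorem IsOpen.ordConnectedComponent {s : Set L} (hs : IsOpen s) (x : L) :
    IsOpen (ordConnectedComponent s x) := by
  refine isOpen_iff_mem_nhds.2 fun y hy => ?_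
  rw [ordConnectedComponent_eq hy]
  exact ordConnectedComponent_mem_nhds.2 (hs.mem_nhds (ordConnectedComponent_subset hy))

theorem IsOpen.isGreatest_or_isLeast_or_mem_Icc {C D : Set L} (hC : IsOpen C) (hD : Dense D)
    {x : L} (hx : x ∈ C) :
    (IsGreatest C x ∨ IsLeast C x) ∨ ∃ a ∈ D ∩ C, ∃ b ∈ D ∩ C, x ∈ Icc a b := by
  by_cases hmax : IsGreatest C x
  · exact .inl (.inl hmax)
  by_cases hmin : IsLeast C x
  · exact .inl (.inr hmin)
  obtain ⟨c, hcC, hxc⟩ : ∃ c ∈ C, x < c := by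
    simpa [IsGreatest, hx, upperBounds] using hmax
  obtain ⟨c', hc'C, hc'x⟩ : ∃ c ∈ C, c < x := by
    simpa [IsLeast, hx, lowerBounds] using hmin
  obtain ⟨b, ⟨hbC, hxb⟩, hbD⟩ := hD.inter_open_nonempty _ (hC.inter isOpen_Ioi) ⟨c, hcC, hxc⟩
  obtain ⟨a, ⟨haC, hax⟩, haD⟩ := hD.inter_open_nonempty _ (hC.inter isOpen_Iio) ⟨c', hc'C, hc'x⟩
  exact .inr ⟨a, ⟨haD, haC⟩, b, ⟨hbD, hbC⟩, hax.le, hxb.le⟩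

/-- The complement of a closed set is covered by the closed intervals it contains whose endpoints
lie in a countable dense set or are among the at most two extreme points of one of the countably
many order-connected components of the complement. -/
instance (priority := 100) OrderTopology.perfectlyNormalSpace [SeparableSpace L] :
    PerfectlyNormalSpace L where
  closed_gdelta A hA := by
    obtain ⟨D, hDc, hD⟩ := exists_countable_dense L
    set C := fun x => ordConnectedComponent Aᶜ x
    set T := D ∪ ⋃ e ∈ D, {x | IsGreatest (C e) x ∨ IsLeast (C e) x}
    have hT : T.Countable := hDc.union <| hDc.biUnion fun e _ =>
      Countable.union (Subsingleton.countable fun _ h₁ _ h₂ => IsGreatest.unique h₁ h₂)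
        (Subsingleton.countable fun _ h₁ _ h₂ => IsLeast.unique h₁ h₂)
    have hcover : ∀ x ∈ Aᶜ, ∃ a ∈ T, ∃ b ∈ T, Icc a b ⊆ Aᶜ ∧ x ∈ Icc a b := by
      intro x hx
      have hxC : x ∈ C x := self_mem_ordConnectedComponent.2 hx
      have hCo : IsOpen (C x) := hA.isOpen_compl.ordConnectedComponent x
      obtain ⟨e, heC, heD⟩ := hD.inter_open_nonempty _ hCo ⟨x, hxC⟩
      have hCe : C e = C x := (ordConnectedComponent_eq heC).symm
      rcases hCo.isGreatest_or_isLeast_or_mem_Icc hD hxC with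
        hext | ⟨a, ⟨haD, haC⟩, b, ⟨hbD, hbC⟩, hxab⟩
      · have hxT : x ∈ T := .inr (mem_biUnion heD (hCe ▸ hext))
        exact ⟨x, hxT, x, hxT, by simpa using hx, left_mem_Icc.2 le_rfl⟩
      · exact ⟨a, .inl haD, b, .inl hbD,
          ordConnectedComponent_subset.trans' (OrdConnected.out' haC hbC), hxab⟩
    have hA_eq : A = ⋂ a ∈ T, ⋂ b ∈ T, ⋂ (_ : Icc a b ⊆ Aᶜ), (Icc a b)ᶜ := by
      ext x
      simp only [mem_iInter, mem_compl_iff]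
      refine ⟨fun hxA a _ b _ hab hx => hab hx hxA, fun h => ?_⟩
      by_contra hxA
      obtain ⟨a, ha, b, hb, hab, hx⟩ := hcover x hxA
      exact h a ha b hb hab hx
    rw [hA_eq]
    exact .biInter hT fun a _ => .biInter hT fun b _ => .iInter fun _ =>
      isClosed_Icc.isOpen_compl.isGδ

theorem orderTopology_of_compactSpace {s : Set L} [CompactSpace s] : OrderTopology s := by
  have hle : (inferInstance : TopologicalSpace s) ≤ Preorder.topology s :=
    induced_topology_le_preorder Subtype.coe_lt_coe
  have hT2 : @T2Space s (Preorder.topology s) := by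
    let := Preorder.topology s
    have : OrderTopology s := ⟨rfl⟩
    infer_instance
  exact ⟨le_antisymm hle <| continuous_id_iff_le.1 <|
    @Continuous.continuous_symm_of_equiv_compact_to_t2 s s _ (Preorder.topology s) _ hT2
      (Equiv.refl s) (continuous_id_iff_le.2 hle)⟩

end LinearOrder

section Topology

variable {M Y : Type*} [TopologicalSpace M] [TopologicalSpace Y]

theorem IsClosedMap.isGδ_of_isGδ_preimage {g : M → Y} (hg : IsClosedMap g)
    (hsurj : Function.Surjective g) {s : Set Y} (hs : IsGδ (g ⁻¹' s)) : IsGδ s := by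
  obtain ⟨U, hUo, hU⟩ := isGδ_iff_eq_iInter_nat.1 hs
  have hs_eq : s = ⋂ n, (g '' (U n)ᶜ)ᶜ := by
    ext y
    obtain ⟨k, rfl⟩ := hsurj y
    simp only [mem_iInter, mem_compl_iff, mem_image, not_exists, not_and]
    refine ⟨fun hk n k' hk' hgk => hk' ?_, fun h => ?_⟩
    · exact mem_iInter.1 (hU.subset (show g k' ∈ s from hgk ▸ hk)) n
    · exact hU.superset (mem_iInter.2 fun n => not_not.1 fun hk => h n k hk rfl)
  rw [hs_eq]
  exact .iInter fun n => (hg _ (hUo n).isClosed_compl).isOpen_compl.isGδ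

/-- If `{x} = ⋂ Uₙ`, then by compactness the finite intersections of closed neighbourhoods
`Nₙ ⊆ Uₙ` of `x` form a neighbourhood base at `x`. -/
theorem isCountablyGenerated_nhds_of_isGδ_singleton [CompactSpace Y] [RegularSpace Y] {x : Y}
    (hx : IsGδ {x}) : (𝓝 x).IsCountablyGenerated := by
  obtain ⟨U, hUo, hU⟩ := isGδ_iff_eq_iInter_nat.1 hx
  have hxU : ∀ n, x ∈ U n := mem_iInter.1 (hU ▸ mem_singleton x)
  choose N hN hNc hNU using fun n => exists_mem_nhds_isClosed_subset ((hUo n).mem_nhds (hxU n))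
  set W : ℕ → Set Y := fun n => ⋂ k ≤ n, N k
  have hWc : ∀ n, IsClosed (W n) := fun n => isClosed_biInter fun k _ => hNc k
  have hW : (𝓝 x).HasBasis (fun _ => True) W := by
    refine ⟨fun t => ⟨fun ht => ?_, fun ⟨n, _, hnt⟩ => ?_⟩⟩
    · have hdir : Directed (· ⊇ ·) W := Antitone.directed_ge fun m n hmn =>
        biInter_mono (fun _ hk => le_trans hk hmn) fun _ _ => subset_rfl
      have hWx : ∀ y ∈ ⋂ n, W n, t ∈ 𝓝 y := by
        intro y hy
        have : y ∈ ⋂ n, U n :=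
          mem_iInter.2 fun n => hNU n (mem_iInter₂.1 (mem_iInter.1 hy n) n le_rfl)
        rw [← hU, mem_singleton_iff] at this
        exact this ▸ ht
      obtain ⟨n, hn⟩ := exists_subset_nhds_of_isCompact' hdir (fun n => (hWc n).isCompact) hWc hWx
      exact ⟨n, trivial, hn⟩
    · exact mem_of_superset ((biInter_mem (finite_le_nat n)).2 fun k _ => hN k) hnt
  exact hW.isCountablyGenerated

/-- `u ↦ (g '' uᶜ)ᶜ` maps a disjoint family of nonempty open sets of `M` injectively to one
of `Y`. -/
theorem IsIrreducibleMap.ccc {g : M → Y} (hirr : IsIrreducibleMap g) (hg : IsClosedMap g)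
    (hY : CCC Y) : CCC M := by
  intro 𝒰 h𝒰 hdisj
  set V : Set M → Set Y := fun u => (g '' uᶜ)ᶜ
  have hVo : ∀ u ∈ 𝒰, IsOpen (V u) := fun u hu => (hg _ (h𝒰 u hu).1.isClosed_compl).isOpen_compl
  have hVne : ∀ u ∈ 𝒰, (V u).Nonempty := fun u hu => nonempty_compl.2 <|
    hirr.2 _ (h𝒰 u hu).1.isClosed_compl (compl_ne_univ.2 (h𝒰 u hu).2)
  have hVsub : ∀ u, g ⁻¹' V u ⊆ u := fun u k hk => not_not.1 fun hku => hk ⟨k, hku, rfl⟩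
  have hVdisj : ∀ u ∈ 𝒰, ∀ v ∈ 𝒰, u ≠ v → Disjoint (V u) (V v) := by
    refine fun u hu v hv huv => disjoint_left.2 fun y hyu hyv => ?_
    obtain ⟨k, rfl⟩ := hirr.1 y
    exact disjoint_left.1 (hdisj hu hv huv) (hVsub u hyu) (hVsub v hyv)
  have hVinj : InjOn V 𝒰 := fun u hu v hv huv => by
    by_contra hne
    have := hVdisj u hu v hv hne
    rw [huv, disjoint_self, bot_eq_empty] at this
    exact (hVne v hv).ne_empty this
  refine countable_of_injective_of_countable_image hVinj <| hY _ ?_ ?_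
  · rintro _ ⟨u, hu, rfl⟩
    exact ⟨hVo u hu, hVne u hu⟩
  · rintro _ ⟨u, hu, rfl⟩ _ ⟨v, hv, rfl⟩ hne
    exact hVdisj u hu v hv fun h => hne (h ▸ rfl)

end Topology

theorem SH_dense_metrizable (hSH : SouslinHypothesis.{u}) (X : Type u)
    [TopologicalSpace X] [T2Space X] [CompactSpace X] (hccc : CCC X)
    (hX : ContinuousImageOfCompactLOTS X) :
    ∃ D : Set X, Dense D ∧ TopologicalSpace.MetrizableSpace ↥D := by
  obtain ⟨K, _, _, _, _, f, hf, hfs⟩ := hX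
  obtain ⟨M, _, hMf, hM⟩ := exists_compact_surjective_zorn_subset hf hfs
  set g := M.domRestrict f
  have hg : Continuous g := hf.comp continuous_subtype_val
  have hirr : IsIrreducibleMap g :=
    ⟨range_eq_univ.1 ((range_domRestrict f M).trans hMf), fun A hA hne => hM A hne hA⟩
  have : OrderTopology M := orderTopology_of_compactSpace
  have : SeparableSpace M := hSH M _ _ this (hirr.ccc hg.isClosedMap hccc)
  have : SeparableSpace X := hirr.1.denseRange.separableSpace hg
  have : FirstCountableTopology X := ⟨fun x => isCountablyGenerated_nhds_of_isGδ_singleton <|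
    hg.isClosedMap.isGδ_of_isGδ_preimage hirr.1 (isClosed_singleton.preimage hg).isGδ⟩
  obtain ⟨D, hDc, hD⟩ := exists_countable_dense X
  have : Countable D := hDc.to_subtype
  exact ⟨D, hD, inferInstance⟩
end
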